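/- arXiv:1409.7543 — 3 statements merged into one kernel-verified Lean document; each statement's English description precedes it below -/
import Mathlib

section
/- Let 𝔨 be a finite-dimensional semisimple Lie algebra over ℝ with Killing form B, let 𝔥 ⊆ 𝔨 be a Lie subalgebra on which B is nondegenerate, let 𝔪 be the Killing-orthogonal complement of 𝔥, and let pr_𝔥 : 𝔨 → 𝔥 be the projection onto 𝔥 along 𝔪. For Z ∈ 𝔥, the bilinear form on 𝔪 × 𝔪 given by (X,Y) ↦ B(Z, pr_𝔥(⁅X,Y⁆)) is nondegenerate if and only if ker(ad Z) ∩ 𝔪 = {0}, i.e. if and only if ⁅Z,X⁆ = 0 with X ∈ 𝔪 implies X = 0. -/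
/-!
Since `B` is invariant and `Z ∈ 𝔥` is orthogonal to `𝔪`, dropping the projection changes nothing:
`B(Z, pr ⁅X,Y⁆) = B(Z, ⁅X,Y⁆) = B(⁅Z,X⁆, Y)`. As `ad Z` preserves `𝔪` and `B` stays nondegenerate
on `𝔪 = 𝔥^⊥`, the form is nondegenerate exactly when `ad Z` is injective on `𝔪`; by
skew-symmetry of `ad Z` the same holds with the roles of `X` and `Y` exchanged.
The splitting `𝔨 = 𝔥 ⊕ 𝔪` holds because `pr` forces `𝔥 ∩ 𝔪 = 0` and `dim 𝔪 = dim 𝔨 - dim 𝔥`;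
it identifies `pr` with the projection along `𝔪`.
-/

open LinearMap (BilinForm)

theorem Submodule.eq_projection {R E : Type*} [Ring R] [AddCommGroup E] [Module R E]
    {p q : Submodule R E} (hpq : IsCompl p q) {f : E →ₗ[R] E}
    (hp : ∀ x ∈ p, f x = x) (hq : ∀ x ∈ q, f x = 0) : f = p.projection q hpq :=
  LinearMap.ext_on_codisjoint hpq.codisjoint
    (fun x hx ↦ by rw [hp x hx, projection_apply_of_mem_left hpq hx])
    (fun x hx ↦ by rw [hq x hx, projection_apply_of_mem_right hpq hx])

namespace LinearMap.BilinForm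

variable {𝕜 V : Type*} [Field 𝕜] [AddCommGroup V] [Module 𝕜 V] {B : BilinForm 𝕜 V}

theorem restrict_orthogonal_nondegenerate [FiniteDimensional 𝕜 V] (hB : B.Nondegenerate)
    (hB_refl : B.IsRefl) {W : Submodule 𝕜 V} (hW : IsCompl W (B.orthogonal W)) :
    (B.restrict (B.orthogonal W)).Nondegenerate := by
  rw [restrict_nondegenerate_iff_isCompl_orthogonal hB_refl, orthogonal_orthogonal hB hB_refl]
  exact hW.symm

theorem exists_mem_apply_ne_zero_iff {W : Submodule 𝕜 V} (hW : (B.restrict W).Nondegenerate)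
    {x : V} (hx : x ∈ W) : (∃ y ∈ W, B x y ≠ 0) ↔ x ≠ 0 := by
  refine ⟨fun ⟨y, _, hxy⟩ hx0 ↦ hxy (by simp [hx0]), fun hx0 ↦ ?_⟩
  by_contra! h
  exact hx0 (congrArg Subtype.val (hW.1 ⟨x, hx⟩ fun y ↦ h y y.2))

theorem forall_exists_apply_ne_zero_iff {W : Submodule 𝕜 V}
    (hW : (B.restrict W).Nondegenerate) {T : V → V} (hT : ∀ x ∈ W, T x ∈ W) :
    (∀ x ∈ W, x ≠ 0 → ∃ y ∈ W, B (T x) y ≠ 0) ↔ ∀ x ∈ W, T x = 0 → x = 0 :=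
  forall₂_congr fun x hx ↦ by rw [exists_mem_apply_ne_zero_iff hW (hT x hx), not_imp_not]

end LinearMap.BilinForm

namespace LieSubalgebra

variable {𝕜 L : Type*} [Field 𝕜] [LieRing L] [LieAlgebra 𝕜 L] {Φ : BilinForm 𝕜 L}
  (H : LieSubalgebra 𝕜 L)

theorem lie_mem_orthogonal (hΦ : Φ.lieInvariant L) {Z X : L} (hZ : Z ∈ H)
    (hX : X ∈ Φ.orthogonal H.toSubmodule) : ⁅Z, X⁆ ∈ Φ.orthogonal H.toSubmodule :=
  fun Y hY ↦ by
    rw [← neg_eq_zero, ← hΦ]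
    exact hX _ (H.lie_mem hZ hY)

theorem apply_projection_lie (hΦ_symm : Φ.IsSymm) (hΦ_inv : Φ.lieInvariant L)
    (hH : IsCompl H.toSubmodule (Φ.orthogonal H.toSubmodule)) {Z : L} (hZ : Z ∈ H) (X Y : L) :
    Φ Z (H.toSubmodule.projection _ hH ⁅X, Y⁆) = Φ ⁅Z, X⁆ Y :=
  calc Φ Z (H.toSubmodule.projection _ hH ⁅X, Y⁆) = Φ Z ⁅X, Y⁆ := by
        have := Submodule.sub_projection_mem hH ⁅X, Y⁆ Z hZ
        rwa [map_sub, sub_eq_zero, eq_comm] at this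
    _ = Φ ⁅X, Y⁆ Z := hΦ_symm.eq _ _
    _ = Φ Y ⁅Z, X⁆ := by rw [hΦ_inv, ← lie_skew, map_neg, neg_neg]
    _ = Φ ⁅Z, X⁆ Y := hΦ_symm.eq _ _

end LieSubalgebra

theorem stmt2_general
    (K : Type*) [LieRing K] [LieAlgebra ℝ K] [Module.Finite ℝ K]
    (hK : (killingForm ℝ K).Nondegenerate)
    (H : LieSubalgebra ℝ K)
    (M : Submodule ℝ K)
    (hM : ∀ X : K, X ∈ M ↔ ∀ Y ∈ H, killingForm ℝ K X Y = 0)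
    (pr : K →ₗ[ℝ] K)
    (hprH : ∀ X ∈ H, pr X = X)
    (hprM : ∀ X ∈ M, pr X = 0)
    (Z : K) (hZ : Z ∈ H) :
    ((∀ X ∈ M, X ≠ 0 → ∃ Y ∈ M, killingForm ℝ K Z (pr ⁅X, Y⁆) ≠ 0) ∧
     (∀ Y ∈ M, Y ≠ 0 → ∃ X ∈ M, killingForm ℝ K Z (pr ⁅X, Y⁆) ≠ 0)) ↔
    (∀ X ∈ M, ⁅Z, X⁆ = 0 → X = 0) := by
  set B := killingForm ℝ K
  have hB_symm : B.IsSymm := ⟨LieModule.traceForm_comm ℝ K K⟩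
  have hB_inv : B.lieInvariant K := LieModule.traceForm_lieInvariant ℝ K K
  obtain rfl : M = B.orthogonal H.toSubmodule := by
    ext X
    exact (hM X).trans (forall₂_congr fun Y _ ↦ hB_symm.eq_iff)
  have hcompl : IsCompl H.toSubmodule (B.orthogonal H.toSubmodule) :=
    (LinearMap.BilinForm.isCompl_orthogonal_iff_disjoint hB_symm.isRefl).mpr <|
      Submodule.disjoint_def.mpr fun X hXH hXM ↦ (hprH X hXH).symm.trans (hprM X hXM)
  obtain rfl := Submodule.eq_projection hcompl hprH hprM
  have key := H.apply_projection_lie hB_symm hB_inv hcompl hZ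
  have key' (X Y : K) : B Z (H.toSubmodule.projection _ hcompl ⁅X, Y⁆) = -B ⁅Z, Y⁆ X := by
    rw [key, hB_inv, hB_symm.eq]
  have hM_nondeg :=
    LinearMap.BilinForm.restrict_orthogonal_nondegenerate hK hB_symm.isRefl hcompl
  have hsep := LinearMap.BilinForm.forall_exists_apply_ne_zero_iff hM_nondeg (T := (⁅Z, ·⁆))
    fun X hX ↦ H.lie_mem_orthogonal hB_inv hZ hX
  refine (and_congr ?_ ?_).trans (and_self_iff.trans hsep)
  · simp only [key]
  · simp only [key', neg_ne_zero]

/-- Lie-algebraic core of Lerman's fatness criterion.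
With `𝔨` semisimple over `ℝ`, `𝔥` a Lie subalgebra on which the Killing form `B` is
nondegenerate, `𝔪` the Killing-orthogonal complement of `𝔥` and `pr` the projection of
`𝔨` onto `𝔥` along `𝔪`, for `Z ∈ 𝔥` the bilinear form `(X,Y) ↦ B(Z, pr ⁅X,Y⁆)` on
`𝔪 × 𝔪` is nondegenerate (for every nonzero `X ∈ 𝔪` some `Y ∈ 𝔪` pairs nontrivially,
and symmetrically) if and only if `ker (ad Z) ∩ 𝔪 = {0}`. -/
theorem stmt2
    (K : Type*) [LieRing K] [LieAlgebra ℝ K] [Module.Finite ℝ K]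
    (hK : (killingForm ℝ K).Nondegenerate)
    (H : LieSubalgebra ℝ K)
    (hH : ((killingForm ℝ K).restrict H.toSubmodule).Nondegenerate)
    (M : Submodule ℝ K)
    (hM : ∀ X : K, X ∈ M ↔ ∀ Y ∈ H, killingForm ℝ K X Y = 0)
    (pr : K →ₗ[ℝ] K)
    (hpr_mem : ∀ X : K, pr X ∈ H)
    (hprH : ∀ X ∈ H, pr X = X)
    (hprM : ∀ X ∈ M, pr X = 0)
    (Z : K) (hZ : Z ∈ H) :
    ((∀ X ∈ M, X ≠ 0 → ∃ Y ∈ M, killingForm ℝ K Z (pr ⁅X, Y⁆) ≠ 0) ∧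
     (∀ Y ∈ M, Y ≠ 0 → ∃ X ∈ M, killingForm ℝ K Z (pr ⁅X, Y⁆) ≠ 0)) ↔
    (∀ X ∈ M, ⁅Z, X⁆ = 0 → X = 0) :=
  stmt2_general K hK H M hM pr hprH hprM Z hZ
end

section
/- Let n ≥ 1 and m ≥ 0. In the real Lie algebra 𝔰𝔬(2n+2m+1) of skew-symmetric (2n+2m+1)×(2n+2m+1) real matrices with the commutator bracket, let J_{2n} ∈ M_{2n}(ℝ) be the block-diagonal matrix consisting of n copies of the 2×2 block [[0,1],[−1,0]], and let T be the block-diagonal matrix diag(J_{2n}, 0_{2m+1}) ∈ 𝔰𝔬(2n+2m+1). For M ∈ M_{2n×(2m+1)}(ℝ) let X(M) ∈ 𝔰𝔬(2n+2m+1) be the block matrix with zero diagonal blocks, upper-right block M and lower-left block −Mᵀ. Then for every M: ⁅T, X(M)⁆ = X(J_{2n}·M), hence ⁅T, ⁅T, X(M)⁆⁆ = −X(M); in particular ⁅T, X(M)⁆ = 0 implies M = 0. -/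
/-!
Bracketing `diag(J, 0)` with the off-diagonal block matrix `X(M)` only sees the upper-right block,
and since `Jᵀ = -J` the result is again of the form `X(J M)`. Iterating, `J² = -1` makes
`(ad T)²` act as `-1` on these matrices, which in particular forces `ad T` to be injective there.
-/

open Matrix

/-- The `2k × 2k` block-diagonal matrix consisting of `k` copies of the
`2 × 2` block `[[0, 1], [-1, 0]]`. -/
def Jmat (k : ℕ) : Matrix (Fin (2 * k)) (Fin (2 * k)) ℝ :=
  Matrix.of fun i j =>
    if (i : ℕ) + 1 = (j : ℕ) ∧ (i : ℕ) % 2 = 0 then 1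
    else if (j : ℕ) + 1 = (i : ℕ) ∧ (j : ℕ) % 2 = 0 then -1
    else 0

/-- The index paired with `i` by the `2 × 2` blocks of `Jmat`. -/
def Jmat.partner {k : ℕ} (i : Fin (2 * k)) : Fin (2 * k) :=
  ⟨if (i : ℕ) % 2 = 0 then i + 1 else i - 1, by split_ifs <;> omega⟩

lemma Jmat_apply_eq_zero {k : ℕ} {i j : Fin (2 * k)} (h : j ≠ Jmat.partner i) :
    Jmat k i j = 0 := by
  simp only [Ne, Fin.ext_iff, Jmat.partner] at h
  simp only [Jmat, of_apply]
  split_ifs at h ⊢ <;> first | rfl | (exfalso; omega)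

lemma Jmat_transpose (k : ℕ) : (Jmat k)ᵀ = -Jmat k := by
  ext i j
  simp only [Jmat, transpose_apply, Matrix.neg_apply, of_apply]
  split_ifs <;> first | (exfalso; omega) | norm_num

lemma Jmat_mul_self (k : ℕ) : Jmat k * Jmat k = -1 := by
  ext i j
  rw [mul_apply, Finset.sum_eq_single (Jmat.partner i)
    (fun b _ hb => by rw [Jmat_apply_eq_zero hb, zero_mul]) (by simp)]
  simp only [Jmat, Jmat.partner, of_apply, Matrix.neg_apply, one_apply, Fin.ext_iff]
  split_ifs <;> first | (exfalso; omega) | norm_num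

section SkewBlocks

variable {R ι κ : Type*} [CommRing R] [Fintype ι] [Fintype κ] {J : Matrix ι ι R}

lemma lie_fromBlocks_skew (hJ : Jᵀ = -J) (M : Matrix ι κ R) :
    ⁅(fromBlocks J 0 0 0 : Matrix (ι ⊕ κ) (ι ⊕ κ) R), fromBlocks 0 M (-Mᵀ) 0⁆ =
      fromBlocks 0 (J * M) (-(J * M)ᵀ) 0 := by
  rw [Ring.lie_def, fromBlocks_multiply, fromBlocks_multiply, transpose_mul, hJ,
    sub_eq_add_neg, fromBlocks_neg, fromBlocks_add]
  simp

lemma lie_fromBlocks_lie_fromBlocks_skew [DecidableEq ι] (hJ : Jᵀ = -J) (hJJ : J * J = -1)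
    (M : Matrix ι κ R) :
    ⁅(fromBlocks J 0 0 0 : Matrix (ι ⊕ κ) (ι ⊕ κ) R),
      ⁅(fromBlocks J 0 0 0 : Matrix (ι ⊕ κ) (ι ⊕ κ) R), fromBlocks 0 M (-Mᵀ) 0⁆⁆ =
      -fromBlocks 0 M (-Mᵀ) 0 := by
  rw [lie_fromBlocks_skew hJ, lie_fromBlocks_skew hJ, ← Matrix.mul_assoc, hJJ, Matrix.neg_mul,
    Matrix.one_mul, fromBlocks_neg]
  simp

lemma eq_zero_of_lie_fromBlocks_skew_eq_zero [DecidableEq ι] (hJ : Jᵀ = -J) (hJJ : J * J = -1)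
    {M : Matrix ι κ R}
    (h : ⁅(fromBlocks J 0 0 0 : Matrix (ι ⊕ κ) (ι ⊕ κ) R), fromBlocks 0 M (-Mᵀ) 0⁆ = 0) :
    M = 0 := by
  rw [lie_fromBlocks_skew hJ, ← fromBlocks_zero, fromBlocks_inj] at h
  simpa [← Matrix.mul_assoc, hJJ] using congrArg (J * ·) h.2.1

end SkewBlocks

theorem stmt11_general (n m : ℕ)
    (T : Matrix (Fin (2 * n) ⊕ Fin (2 * m + 1)) (Fin (2 * n) ⊕ Fin (2 * m + 1)) ℝ)
    (hT : T = Matrix.fromBlocks (Jmat n) 0 0 0)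
    (X : Matrix (Fin (2 * n)) (Fin (2 * m + 1)) ℝ →
      Matrix (Fin (2 * n) ⊕ Fin (2 * m + 1)) (Fin (2 * n) ⊕ Fin (2 * m + 1)) ℝ)
    (hX : ∀ M, X M = Matrix.fromBlocks 0 M (-Mᵀ) 0) :
    ∀ M : Matrix (Fin (2 * n)) (Fin (2 * m + 1)) ℝ,
      ⁅T, X M⁆ = X (Jmat n * M) ∧
      ⁅T, ⁅T, X M⁆⁆ = -(X M) ∧
      (⁅T, X M⁆ = 0 → M = 0) := by
  intro M
  subst hT
  simp only [hX]
  exact ⟨lie_fromBlocks_skew (Jmat_transpose n) M,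
    lie_fromBlocks_lie_fromBlocks_skew (Jmat_transpose n) (Jmat_mul_self n) M,
    eq_zero_of_lie_fromBlocks_skew_eq_zero (Jmat_transpose n) (Jmat_mul_self n)⟩

/-- In `𝔰𝔬(2n+2m+1)` with the commutator bracket, let
`T = diag(J_{2n}, 0_{2m+1})` and, for `M ∈ M_{2n×(2m+1)}(ℝ)`, let
`X(M) = [[0, M], [-Mᵀ, 0]]`.  Then `⁅T, X(M)⁆ = X(J_{2n}·M)`, hence
`⁅T, ⁅T, X(M)⁆⁆ = -X(M)`, and `⁅T, X(M)⁆ = 0` implies `M = 0`. -/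
theorem stmt11 (n m : ℕ) (hn : 1 ≤ n) (hm : 0 ≤ m)
    (T : Matrix (Fin (2 * n) ⊕ Fin (2 * m + 1)) (Fin (2 * n) ⊕ Fin (2 * m + 1)) ℝ)
    (hT : T = Matrix.fromBlocks (Jmat n) 0 0 0)
    (X : Matrix (Fin (2 * n)) (Fin (2 * m + 1)) ℝ →
      Matrix (Fin (2 * n) ⊕ Fin (2 * m + 1)) (Fin (2 * n) ⊕ Fin (2 * m + 1)) ℝ)
    (hX : ∀ M, X M = Matrix.fromBlocks 0 M (-Mᵀ) 0) :
    ∀ M : Matrix (Fin (2 * n)) (Fin (2 * m + 1)) ℝ,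
      ⁅T, X M⁆ = X (Jmat n * M) ∧
      ⁅T, ⁅T, X M⁆⁆ = -(X M) ∧
      (⁅T, X M⁆ = 0 → M = 0) :=
  stmt11_general n m T hT X hX
end

section
/- Let n, m ≥ 1. In the real Lie algebra 𝔰𝔭(n+m) of quaternionic skew-adjoint matrices, i.e. matrices A ∈ M_{(n+m)×(n+m)}(ℍ) with A^* = −A where A^* is the conjugate transpose, equipped with the commutator bracket, let T = diag(0_n, i·I_m) (block-diagonal, with i the quaternion unit). For M ∈ M_{n×m}(ℍ) let X(M) ∈ 𝔰𝔭(n+m) be the block matrix with zero diagonal blocks, upper-right block M and lower-left block −M^*. Then for every M: ⁅T, X(M)⁆ = X(−M·i), hence ⁅T, ⁅T, X(M)⁆⁆ = −X(M); in particular ⁅T, X(M)⁆ = 0 implies M = 0. -/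
open Matrix Quaternion

/-! With `D = diag(i, …, i)` we have `Dᴴ = -D` and `D * D = -1`. Bracketing `X(M)` with the
block-diagonal `diag(0, D)` gives `X(-M D)`, so `ad T` acts on `𝔪` as right multiplication by
`-D`, whose square is `-1`; in particular `ad T` is injective on `𝔪`. -/

def qi : Quaternion ℝ := ⟨0, 1, 0, 0⟩

namespace Matrix

variable {ι κ α : Type*} [Ring α] [StarRing α]

def skewOffDiag (M : Matrix ι κ α) : Matrix (ι ⊕ κ) (ι ⊕ κ) α :=
  fromBlocks 0 M (-Mᴴ) 0

theorem skewOffDiag_neg (M : Matrix ι κ α) : skewOffDiag (-M) = -skewOffDiag M := by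
  simp [skewOffDiag, fromBlocks_neg]

theorem skewOffDiag_eq_zero_iff {M : Matrix ι κ α} : skewOffDiag M = 0 ↔ M = 0 := by
  refine ⟨fun h => ?_, fun h => by simp [h, skewOffDiag]⟩
  ext i j
  simpa [skewOffDiag] using congrFun₂ h (.inl i) (.inr j)

variable [Fintype ι] [Fintype κ] [DecidableEq ι] [DecidableEq κ]

theorem lie_fromBlocks_skewOffDiag {D : Matrix κ κ α} (hD : Dᴴ = -D) (M : Matrix ι κ α) :
    ⁅fromBlocks (0 : Matrix ι ι α) 0 0 D, skewOffDiag M⁆ = skewOffDiag (-(M * D)) := by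
  simp [Ring.lie_def, skewOffDiag, fromBlocks_multiply, sub_eq_add_neg, fromBlocks_neg,
    fromBlocks_add, conjTranspose_mul, hD]

theorem lie_lie_fromBlocks_skewOffDiag {D : Matrix κ κ α} (hD : Dᴴ = -D) (hD2 : D * D = -1)
    (M : Matrix ι κ α) :
    ⁅fromBlocks (0 : Matrix ι ι α) 0 0 D, ⁅fromBlocks (0 : Matrix ι ι α) 0 0 D,
      skewOffDiag M⁆⁆ = -skewOffDiag M := by
  rw [lie_fromBlocks_skewOffDiag hD, lie_fromBlocks_skewOffDiag hD, ← skewOffDiag_neg]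
  simp [Matrix.mul_assoc, hD2]

theorem eq_zero_of_lie_fromBlocks_skewOffDiag_eq_zero {D : Matrix κ κ α} (hD : Dᴴ = -D)
    (hD2 : D * D = -1) {M : Matrix ι κ α}
    (h : ⁅fromBlocks (0 : Matrix ι ι α) 0 0 D, skewOffDiag M⁆ = 0) : M = 0 := by
  have hsq := lie_lie_fromBlocks_skewOffDiag hD hD2 M
  rw [h, Ring.lie_def, Matrix.mul_zero, Matrix.zero_mul, sub_zero, eq_comm, neg_eq_zero,
    skewOffDiag_eq_zero_iff] at hsq
  exact hsq

end Matrix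

@[simp] theorem qi_re : qi.re = 0 := rfl
@[simp] theorem qi_imI : qi.imI = 1 := rfl
@[simp] theorem qi_imJ : qi.imJ = 0 := rfl
@[simp] theorem qi_imK : qi.imK = 0 := rfl

theorem star_qi : star qi = -qi := by
  ext <;> simp

theorem qi_mul_qi : qi * qi = -1 := by
  ext <;> simp

theorem conjTranspose_diagonal_qi (m : ℕ) :
    (diagonal fun _ : Fin m => qi)ᴴ = -diagonal fun _ => qi := by
  simp [diagonal_conjTranspose, star_qi, diagonal_neg]

theorem diagonal_qi_mul_self (m : ℕ) :
    (diagonal fun _ : Fin m => qi) * (diagonal fun _ => qi) = -1 := by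
  simp [qi_mul_qi, ← diagonal_neg, ← diagonal_one]

theorem stmt12_general (n m : ℕ)
    (T : Matrix (Fin n ⊕ Fin m) (Fin n ⊕ Fin m) (Quaternion ℝ))
    (hT : T = Matrix.fromBlocks 0 0 0 (Matrix.diagonal fun _ => qi))
    (X : Matrix (Fin n) (Fin m) (Quaternion ℝ) →
      Matrix (Fin n ⊕ Fin m) (Fin n ⊕ Fin m) (Quaternion ℝ))
    (hX : ∀ M, X M = Matrix.fromBlocks 0 M (-Mᴴ) 0) :
    ∀ M : Matrix (Fin n) (Fin m) (Quaternion ℝ),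
      ⁅T, X M⁆ = X (-(M * Matrix.diagonal fun _ => qi)) ∧
      ⁅T, ⁅T, X M⁆⁆ = -(X M) ∧
      (⁅T, X M⁆ = 0 → M = 0) := by
  obtain rfl : X = skewOffDiag := funext hX
  subst hT
  intro M
  exact ⟨lie_fromBlocks_skewOffDiag (conjTranspose_diagonal_qi m) M,
    lie_lie_fromBlocks_skewOffDiag (conjTranspose_diagonal_qi m) (diagonal_qi_mul_self m) M,
    eq_zero_of_lie_fromBlocks_skewOffDiag_eq_zero (conjTranspose_diagonal_qi m)
      (diagonal_qi_mul_self m)⟩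

/-- In the compact symplectic Lie algebra `𝔰𝔭(n+m)` of
quaternionic skew-adjoint matrices with the commutator bracket, let
`T = diag(0_n, i·I_m)` and, for `M ∈ M_{n×m}(ℍ)`, let
`X(M) = [[0, M], [-M^*, 0]]`.  Then `⁅T, X(M)⁆ = X(-M·i)`, hence
`⁅T, ⁅T, X(M)⁆⁆ = -X(M)`, and `⁅T, X(M)⁆ = 0` implies `M = 0`. -/
theorem stmt12 (n m : ℕ) (hn : 1 ≤ n) (hm : 1 ≤ m)
    (T : Matrix (Fin n ⊕ Fin m) (Fin n ⊕ Fin m) (Quaternion ℝ))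
    (hT : T = Matrix.fromBlocks 0 0 0 (Matrix.diagonal fun _ => qi))
    (X : Matrix (Fin n) (Fin m) (Quaternion ℝ) →
      Matrix (Fin n ⊕ Fin m) (Fin n ⊕ Fin m) (Quaternion ℝ))
    (hX : ∀ M, X M = Matrix.fromBlocks 0 M (-Mᴴ) 0) :
    ∀ M : Matrix (Fin n) (Fin m) (Quaternion ℝ),
      ⁅T, X M⁆ = X (-(M * Matrix.diagonal fun _ => qi)) ∧
      ⁅T, ⁅T, X M⁆⁆ = -(X M) ∧
      (⁅T, X M⁆ = 0 → M = 0) :=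
  stmt12_general n m T hT X hX
end
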